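/- arXiv:2604.13341 — 3 statements merged into one kernel-verified Lean document; each statement's English description precedes it below -/
import Mathlib

section
/- Let Θ be a measurable space, μ a probability measure on Θ, k : Θ → ℝ a bounded nonnegative measurable function with Z := ∫ k dμ > 0, and α ∈ (0,1). Define the Newton update μ' := (1−α)·μ + α·μ.withDensity(θ ↦ k(θ)/Z). Then (i) μ' is a probability measure, and (ii) for every bounded measurable φ : Θ → ℝ, ∫ φ dμ' = ∫ φ dμ − α·∫ φ(θ)·( V(θ) − ∫ V dμ ) dμ(θ), where V(θ) := −k(θ)/Z. That is, Newton's recursion is exactly the forward Euler step with step size α for the Fisher–Rao gradient flow ∂_t μ_t = −μ_t·( V − ∫ V dμ_t ) of the functional F(μ) = −log ∫ k dμ, whose first variation at μ is V. -/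
open MeasureTheory Real

/-! The Newton update is the mixture `(1 - α) μ + α ρ μ` with the posterior density
`ρ = k / Z`, so it integrates `φ` to `∫ φ dμ - α (∫ φ dμ - ∫ φ ρ dμ)`. Since `∫ ρ dμ = 1`,
the centred first variation `V - ∫ V dμ = 1 - ρ` turns the Euler increment
`-α ∫ φ (V - ∫ V dμ) dμ` into the same expression. -/

section

variable {Θ : Type*} [MeasurableSpace Θ] {μ ν : Measure Θ}
  {E : Type*} [NormedAddCommGroup E] [NormedSpace ℝ E]

lemma isProbabilityMeasure_withDensity_ofReal {ρ : Θ → ℝ} (hρ_nonneg : 0 ≤ᵐ[μ] ρ)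
    (hρ_int : Integrable ρ μ) (hρ_mass : ∫ θ, ρ θ ∂μ = 1) :
    IsProbabilityMeasure (μ.withDensity fun θ => ENNReal.ofReal (ρ θ)) := by
  constructor
  rw [withDensity_apply _ MeasurableSet.univ, setLIntegral_univ,
    ← ofReal_integral_eq_lintegral_ofReal hρ_int hρ_nonneg, hρ_mass, ENNReal.ofReal_one]

lemma integral_withDensity_ofReal {ρ : Θ → ℝ} (hρ_meas : AEMeasurable ρ μ)
    (hρ_nonneg : 0 ≤ᵐ[μ] ρ) (φ : Θ → E) :
    ∫ θ, φ θ ∂μ.withDensity (fun θ => ENNReal.ofReal (ρ θ)) = ∫ θ, ρ θ • φ θ ∂μ := by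
  rw [integral_withDensity_eq_integral_toReal_smul₀ hρ_meas.ennreal_ofReal
    (ae_of_all _ fun _ => ENNReal.ofReal_lt_top)]
  refine integral_congr_ae (hρ_nonneg.mono fun θ hθ => ?_)
  simp only [ENNReal.toReal_ofReal hθ]

lemma isProbabilityMeasure_convexCombination [IsProbabilityMeasure μ] [IsProbabilityMeasure ν]
    {α : ℝ} (hα₀ : 0 ≤ α) (hα₁ : α ≤ 1) :
    IsProbabilityMeasure (ENNReal.ofReal (1 - α) • μ + ENNReal.ofReal α • ν) := by
  constructor
  simp only [Measure.add_apply, Measure.smul_apply, measure_univ, smul_eq_mul, mul_one]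
  rw [← ENNReal.ofReal_add (by linarith) hα₀, sub_add_cancel, ENNReal.ofReal_one]

lemma integral_convexCombination {φ : Θ → E} (hφμ : Integrable φ μ) (hφν : Integrable φ ν)
    {α : ℝ} (hα₀ : 0 ≤ α) (hα₁ : α ≤ 1) :
    ∫ θ, φ θ ∂(ENNReal.ofReal (1 - α) • μ + ENNReal.ofReal α • ν)
      = (1 - α) • ∫ θ, φ θ ∂μ + α • ∫ θ, φ θ ∂ν := by
  rw [integral_add_measure (hφμ.smul_measure ENNReal.ofReal_ne_top)
      (hφν.smul_measure ENNReal.ofReal_ne_top),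
    integral_smul_measure, integral_smul_measure,
    ENNReal.toReal_ofReal (by linarith), ENNReal.toReal_ofReal hα₀]

lemma integral_mul_sub_integral {φ V : Θ → ℝ} (hφ : Integrable φ μ)
    (hφV : Integrable (fun θ => φ θ * V θ) μ) :
    ∫ θ, φ θ * (V θ - ∫ θ', V θ' ∂μ) ∂μ
      = ∫ θ, φ θ * V θ ∂μ - (∫ θ, φ θ ∂μ) * ∫ θ, V θ ∂μ := by
  simp_rw [mul_sub]
  rw [integral_sub hφV (hφ.mul_const _), integral_mul_const]

end

theorem newton_recursion_is_fisher_rao_euler_step_general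
    {Θ : Type*} [MeasurableSpace Θ] (μ : Measure Θ) [IsProbabilityMeasure μ]
    (k : Θ → ℝ) (hk_nonneg : ∀ θ, 0 ≤ k θ)
    (Z : ℝ) (hZ : Z = ∫ θ, k θ ∂μ) (hZpos : 0 < Z)
    (α : ℝ) (hα : α ∈ Set.Ioo (0 : ℝ) 1)
    (μ' : Measure Θ)
    (hμ' : μ' = ENNReal.ofReal (1 - α) • μ
        + ENNReal.ofReal α • μ.withDensity (fun θ => ENNReal.ofReal (k θ / Z)))
    (V : Θ → ℝ) (hV : V = fun θ => -(k θ) / Z) :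
    IsProbabilityMeasure μ' ∧
      ∀ φ : Θ → ℝ, Measurable φ → (∃ Cφ : ℝ, ∀ θ, |φ θ| ≤ Cφ) →
        ∫ θ, φ θ ∂μ' = (∫ θ, φ θ ∂μ)
          - α * ∫ θ, φ θ * (V θ - ∫ θ', V θ' ∂μ) ∂μ := by
  obtain ⟨hα₀, hα₁⟩ := hα
  -- `Z > 0` forces `k` to be integrable, since a non-integrable function has Bochner integral `0`.
  have hρ_int : Integrable (fun θ => k θ / Z) μ :=
    (Integrable.of_integral_ne_zero (hZ ▸ hZpos.ne')).div_const Z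
  have hρ_nonneg : 0 ≤ᵐ[μ] fun θ => k θ / Z :=
    ae_of_all _ fun θ => div_nonneg (hk_nonneg θ) hZpos.le
  have hρ_mass : ∫ θ, k θ / Z ∂μ = 1 := by rw [integral_div, ← hZ, div_self hZpos.ne']
  have := isProbabilityMeasure_withDensity_ofReal hρ_nonneg hρ_int hρ_mass
  subst hμ' hV
  refine ⟨isProbabilityMeasure_convexCombination hα₀.le hα₁.le, fun φ hφ ⟨Cφ, hCφ⟩ => ?_⟩
  have hφ_int (ν : Measure Θ) [IsFiniteMeasure ν] : Integrable φ ν :=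
    .of_bound hφ.aestronglyMeasurable Cφ (ae_of_all _ hCφ)
  have hφρ_int : Integrable (fun θ => φ θ * (-k θ / Z)) μ := by
    simpa only [neg_div, Pi.neg_apply] using
      hρ_int.neg.bdd_mul hφ.aestronglyMeasurable (ae_of_all _ hCφ)
  rw [integral_convexCombination (hφ_int _) (hφ_int _) hα₀.le hα₁.le,
    integral_withDensity_ofReal hρ_int.aemeasurable hρ_nonneg,
    integral_mul_sub_integral (hφ_int μ) hφρ_int]
  simp only [neg_div, mul_neg, integral_neg, hρ_mass, smul_eq_mul, mul_comm (k _ / Z)]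
  ring

/-- Newton's recursion `μ' = (1-α)μ + α·(k/Z)μ` (with `Z = ∫ k dμ`) is a probability
measure, and it is exactly the forward Euler step of size `α` for the Fisher–Rao
gradient flow of `F(μ) = -log ∫ k dμ`, whose first variation is `V = -k/Z`: for every
bounded measurable test function `φ`,
`∫ φ dμ' = ∫ φ dμ - α ∫ φ(θ)(V(θ) - ∫ V dμ) dμ(θ)`. -/
theorem newton_recursion_is_fisher_rao_euler_step
    {Θ : Type*} [MeasurableSpace Θ] (μ : Measure Θ) [IsProbabilityMeasure μ]
    (k : Θ → ℝ) (hk_meas : Measurable k) (hk_nonneg : ∀ θ, 0 ≤ k θ)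
    (C : ℝ) (hk_bdd : ∀ θ, k θ ≤ C)
    (Z : ℝ) (hZ : Z = ∫ θ, k θ ∂μ) (hZpos : 0 < Z)
    (α : ℝ) (hα : α ∈ Set.Ioo (0 : ℝ) 1)
    (μ' : Measure Θ)
    (hμ' : μ' = ENNReal.ofReal (1 - α) • μ
        + ENNReal.ofReal α • μ.withDensity (fun θ => ENNReal.ofReal (k θ / Z)))
    (V : Θ → ℝ) (hV : V = fun θ => -(k θ) / Z) :
    IsProbabilityMeasure μ' ∧
      ∀ φ : Θ → ℝ, Measurable φ → (∃ Cφ : ℝ, ∀ θ, |φ θ| ≤ Cφ) →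
        ∫ θ, φ θ ∂μ' = (∫ θ, φ θ ∂μ)
          - α * ∫ θ, φ θ * (V θ - ∫ θ', V θ' ∂μ) ∂μ :=
  newton_recursion_is_fisher_rao_euler_step_general μ k hk_nonneg Z hZ hZpos α hα μ' hμ' V hV
end

section
/- (Attainment in the Donsker–Varadhan formula.) Let P be a probability measure on a measurable space Θ and let Φ : Θ → ℝ be measurable and bounded. Define the Gibbs measure q* := P.withDensity( θ ↦ e^{Φ(θ)} / ∫ e^Φ dP ). Then q* is a probability measure absolutely continuous with respect to P, its Kullback–Leibler divergence KL(q*‖P) is finite, and ∫ Φ dq* − KL(q*‖P) = log ∫ e^Φ dP. Consequently log ∫ e^Φ dP equals the supremum over probability measures q of ∫ Φ dq − KL(q‖P). -/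
open MeasureTheory Real

/-- Nonnegativity of KL divergence. -/
lemma kl_nonneg_aux {Θ : Type*} [MeasurableSpace Θ] (q ν : Measure Θ)
    [IsProbabilityMeasure q] [IsProbabilityMeasure ν] (hqν : q ≪ ν)
    (h_int : Integrable (llr q ν) q) : 0 ≤ ∫ θ, llr q ν θ ∂q := by
  have h_int_rn : Integrable (fun x => (ν.rnDeriv q x).toReal) q :=
    Measure.integrable_toReal_rnDeriv
  have h_eq : (fun x => - llr q ν x) =ᵐ[q] fun x => Real.log ((ν.rnDeriv q x).toReal) :=
    MeasureTheory.neg_llr hqν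
  have h_pos : ∀ᵐ x ∂q, 0 < (ν.rnDeriv q x).toReal := by
    filter_upwards [Measure.rnDeriv_pos' hqν, Measure.rnDeriv_lt_top ν q] with x h1 h2
    exact ENNReal.toReal_pos h1.ne' h2.ne
  have h_le : ∫ x, - llr q ν x ∂q ≤ ∫ x, ((ν.rnDeriv q x).toReal - 1) ∂q := by
    refine integral_mono_ae h_int.neg (h_int_rn.sub (integrable_const 1)) ?_
    filter_upwards [h_eq, h_pos] with x hx hx_pos
    rw [hx]
    exact Real.log_le_sub_one_of_pos hx_pos
  have h_le2 : ∫ x, ((ν.rnDeriv q x).toReal - 1) ∂q ≤ 0 := by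
    rw [integral_sub h_int_rn (integrable_const 1)]
    simp only [integral_const, measure_univ, probReal_univ, ENNReal.toReal_one, smul_eq_mul, one_mul]
    have := Measure.setIntegral_toReal_rnDeriv_le (μ := ν) (ν := q) (s := Set.univ)
      (by simp : ν Set.univ ≠ ⊤)
    simp only [Measure.restrict_univ, measure_univ, probReal_univ, ENNReal.toReal_one] at this
    linarith
  rw [integral_neg] at h_le
  linarith

/-- Attainment in the Donsker–Varadhan formula: for bounded measurable `Φ`, the Gibbs
measure `q* = (e^Φ/∫e^Φ dP)·P` is a probability measure, absolutely continuous w.r.t.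
`P`, with finite KL divergence (the log-likelihood ratio `llr q* P` is `q*`-integrable),
it attains `∫ Φ dq* - KL(q*‖P) = log ∫ e^Φ dP`, and `log ∫ e^Φ dP` is the greatest
value of `q ↦ ∫ Φ dq - KL(q‖P)` over probability measures `q` (with finite KL). -/
theorem donsker_varadhan_attainment
    {Θ : Type*} [MeasurableSpace Θ] (P : Measure Θ) [IsProbabilityMeasure P]
    (Φ : Θ → ℝ) (hΦ_meas : Measurable Φ) (C : ℝ) (hΦ_bdd : ∀ θ, |Φ θ| ≤ C)
    (qs : Measure Θ)
    (hqs : qs = P.withDensity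
        (fun θ => ENNReal.ofReal (Real.exp (Φ θ) / ∫ θ', Real.exp (Φ θ') ∂P))) :
    IsProbabilityMeasure qs ∧ qs ≪ P ∧ Integrable (llr qs P) qs ∧
      ((∫ θ, Φ θ ∂qs) - ∫ θ, llr qs P θ ∂qs = Real.log (∫ θ, Real.exp (Φ θ) ∂P)) ∧
      IsGreatest
        {r : ℝ | ∃ q : Measure Θ, IsProbabilityMeasure q ∧ q ≪ P ∧
            Integrable (llr q P) q ∧ Integrable Φ q ∧
            r = (∫ θ, Φ θ ∂q) - ∫ θ, llr q P θ ∂q}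
        (Real.log (∫ θ, Real.exp (Φ θ) ∂P)) := by
  have hqs_tilted : qs = P.tilted Φ := hqs
  -- integrability of exp Φ
  have h_exp_int : Integrable (fun θ => Real.exp (Φ θ)) P := by
    refine Integrable.mono' (integrable_const (Real.exp C)) (hΦ_meas.exp.aestronglyMeasurable) ?_
    filter_upwards with θ
    rw [Real.norm_of_nonneg (Real.exp_pos _).le]
    exact Real.exp_le_exp.mpr ((abs_le.mp (hΦ_bdd θ)).2)
  have h_prob : IsProbabilityMeasure qs := by
    rw [hqs_tilted]; exact isProbabilityMeasure_tilted h_exp_int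
  have h_ac : qs ≪ P := hqs_tilted ▸ tilted_absolutelyContinuous P Φ
  -- llr qs P is a.e. equal (w.r.t. P) to Φ - log Z
  have h_llr_ae : llr qs P =ᵐ[P] fun θ => Φ θ - Real.log (∫ θ', Real.exp (Φ θ') ∂P) := by
    rw [hqs_tilted]
    have := llr_tilted_left (μ := P) (ν := P) Measure.AbsolutelyContinuous.rfl h_exp_int
      hΦ_meas.aemeasurable
    have h0 : llr P P =ᵐ[P] fun _ => (0 : ℝ) := by
      filter_upwards [Measure.rnDeriv_self P] with x hx
      simp [llr, hx]
    filter_upwards [this, h0] with x hx hx0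
    rw [hx, hx0]
    simp
  have h_llr_ae_qs : llr qs P =ᵐ[qs] fun θ => Φ θ - Real.log (∫ θ', Real.exp (Φ θ') ∂P) :=
    h_ac.ae_le h_llr_ae
  -- Φ is integrable w.r.t. any finite measure
  have hΦ_int : ∀ (q : Measure Θ) [IsProbabilityMeasure q], Integrable Φ q := by
    intro q _
    exact Integrable.mono' (integrable_const C) hΦ_meas.aestronglyMeasurable
      (Filter.Eventually.of_forall hΦ_bdd)
  have h_llr_int : Integrable (llr qs P) qs := by
    rw [integrable_congr h_llr_ae_qs]
    exact (hΦ_int qs).sub (integrable_const _)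
  have h_int_llr : ∫ θ, llr qs P θ ∂qs
      = (∫ θ, Φ θ ∂qs) - Real.log (∫ θ', Real.exp (Φ θ') ∂P) := by
    rw [integral_congr_ae h_llr_ae_qs, integral_sub (hΦ_int qs) (integrable_const _)]
    simp
  have h_attain : (∫ θ, Φ θ ∂qs) - ∫ θ, llr qs P θ ∂qs
      = Real.log (∫ θ, Real.exp (Φ θ) ∂P) := by
    rw [h_int_llr]; ring
  refine ⟨h_prob, h_ac, h_llr_int, h_attain, ?_, ?_⟩
  · exact ⟨qs, h_prob, h_ac, h_llr_int, hΦ_int qs, h_attain.symm⟩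
  · rintro r ⟨q, hq_prob, hq_ac, hq_llr, hq_Φ, rfl⟩
    -- use KL(q ‖ P.tilted Φ) ≥ 0
    have h_tilted_prob : IsProbabilityMeasure (P.tilted Φ) := isProbabilityMeasure_tilted h_exp_int
    have hq_ac' : q ≪ P.tilted Φ := hq_ac.trans (absolutelyContinuous_tilted h_exp_int)
    have h_int_tilted : Integrable (llr q (P.tilted Φ)) q :=
      integrable_llr_tilted_right hq_ac hq_Φ hq_llr h_exp_int
    have h_eq := integral_llr_tilted_right hq_ac hq_Φ h_exp_int hq_llr
    have h_nonneg := kl_nonneg_aux q (P.tilted Φ) hq_ac' h_int_tilted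
    rw [h_eq] at h_nonneg
    linarith
end

section
/- (Bayes posterior as unique minimiser of the variational free energy.) Let P be a probability measure on a measurable space Θ and let L : Θ → ℝ be measurable and bounded (playing the role of the negative log-likelihood L(θ) = −∑_{i=1}^n log p(x_i | θ)). Define Z := ∫ e^{−L} dP and the Gibbs posterior q* := P.withDensity( θ ↦ e^{−L(θ)}/Z ). Then for every probability measure q on Θ absolutely continuous with respect to P with KL(q‖P) < ∞ and L q-integrable, one has ∫ L dq + KL(q‖P) ≥ ∫ L dq* + KL(q*‖P) = −log Z, and equality holds if and only if q = q*. In particular q* is the unique minimiser of the free energy functional q ↦ E_q[L] + KL(q‖P). -/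
open MeasureTheory Real

lemma gibbs_aux {α : Type*} [MeasurableSpace α] (μ ν : Measure α)
    [IsProbabilityMeasure μ] [IsProbabilityMeasure ν] (hμν : μ ≪ ν)
    (hint : Integrable (llr μ ν) μ) :
    0 ≤ ∫ x, llr μ ν x ∂μ ∧ (∫ x, llr μ ν x ∂μ = 0 → μ = ν) := by
  set g : α → ℝ := fun x => (ν.rnDeriv μ x).toReal with hg
  have hg_int : Integrable g μ := by
    have h := Measure.integrableOn_toReal_rnDeriv (μ := ν) (ν := μ) (s := Set.univ)
      (measure_ne_top ν _)
    rwa [IntegrableOn, Measure.restrict_univ] at h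
  have h_ae : ∀ᵐ x ∂μ, 0 < g x ∧ llr μ ν x = -Real.log (g x) := by
    filter_upwards [Measure.inv_rnDeriv hμν, Measure.rnDeriv_pos hμν,
      hμν.ae_le (Measure.rnDeriv_lt_top μ ν)] with x hx_inv hx_pos hx_fin
    have hr_pos : 0 < (μ.rnDeriv ν x).toReal := ENNReal.toReal_pos hx_pos.ne' hx_fin.ne
    have hgx : g x = ((μ.rnDeriv ν x).toReal)⁻¹ := by
      have : ((μ.rnDeriv ν x)⁻¹) = ν.rnDeriv μ x := hx_inv
      rw [hg]
      simp only [← this, ENNReal.toReal_inv]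
    refine ⟨by rw [hgx]; positivity, ?_⟩
    rw [llr, hgx, Real.log_inv, neg_neg]
  have h_le : ∀ᵐ x ∂μ, 1 - g x ≤ llr μ ν x := by
    filter_upwards [h_ae] with x hx
    obtain ⟨hx_pos, hx_eq⟩ := hx
    have := Real.log_le_sub_one_of_pos hx_pos
    rw [hx_eq]; linarith
  have h_int_g_le : ∫ x, g x ∂μ ≤ 1 := by
    have h := Measure.integral_toReal_rnDeriv' (μ := ν) (ν := μ)
    rw [h]
    simp only [measure_univ, ENNReal.toReal_one, measureReal_def]
    have : 0 ≤ ((ν.singularPart μ) Set.univ).toReal := ENNReal.toReal_nonneg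
    linarith
  have h_sub_int : ∫ x, (1 - g x) ∂μ = 1 - ∫ x, g x ∂μ := by
    rw [integral_sub (integrable_const 1) hg_int]; simp
  have h_lb : 1 - ∫ x, g x ∂μ ≤ ∫ x, llr μ ν x ∂μ := by
    rw [← h_sub_int]
    exact integral_mono_ae ((integrable_const 1).sub hg_int) hint h_le
  refine ⟨by linarith, fun h0 => ?_⟩
  have h_g_one : ∫ x, g x ∂μ = 1 := by linarith
  have h2int : Integrable (fun x => 1 - g x) μ := (integrable_const 1).sub hg_int
  have h_int_eq : ∫ x, (llr μ ν x - (1 - g x)) ∂μ = 0 := by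
    rw [integral_sub hint h2int, h0, h_sub_int, h_g_one]; ring
  have h_zero_ae : (fun x => llr μ ν x - (1 - g x)) =ᵐ[μ] 0 := by
    have hnn : 0 ≤ᵐ[μ] fun x => llr μ ν x - (1 - g x) := by
      filter_upwards [h_le] with x hx
      simp only [Pi.zero_apply]; linarith
    exact (integral_eq_zero_iff_of_nonneg_ae hnn
      (hint.sub h2int)).1 h_int_eq
  have h_g_eq_one : ν.rnDeriv μ =ᵐ[μ] fun _ => 1 := by
    filter_upwards [h_zero_ae, h_ae, Measure.rnDeriv_lt_top ν μ] with x hx0 hx hx_fin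
    obtain ⟨hx_pos, hx_eq⟩ := hx
    have hgx1 : g x = 1 := by
      by_contra hne
      have hlt := Real.log_lt_sub_one_of_pos hx_pos hne
      simp only [Pi.zero_apply] at hx0
      rw [hx_eq] at hx0
      linarith
    have : ν.rnDeriv μ x = ENNReal.ofReal 1 := by
      rw [← ENNReal.ofReal_toReal hx_fin.ne]
      exact congrArg _ hgx1
    simpa using this
  have h_sing : ν.singularPart μ = 0 := by
    have h' := Measure.integral_toReal_rnDeriv' (μ := ν) (ν := μ)
    rw [h_g_one] at h'
    simp only [measure_univ, ENNReal.toReal_one, measureReal_def] at h'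
    have h1 : ((ν.singularPart μ) Set.univ).toReal = 0 := by linarith
    have h2 : (ν.singularPart μ) Set.univ ≠ ⊤ :=
      ((Measure.singularPart_le ν μ Set.univ).trans_lt (measure_lt_top ν _)).ne
    have h3 : (ν.singularPart μ) Set.univ = 0 := by
      rwa [ENNReal.toReal_eq_zero_iff, or_iff_left h2] at h1
    exact Measure.measure_univ_eq_zero.mp h3
  have hν : ν = μ := by
    conv_lhs => rw [ν.haveLebesgueDecomposition_add μ]
    rw [h_sing, zero_add, withDensity_congr_ae h_g_eq_one]
    simp
  exact hν.symm


/-- The Bayes (Gibbs) posterior `q* = (e^{-L}/Z)·P`, `Z = ∫ e^{-L} dP`, is the unique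
minimiser of the variational free energy `q ↦ ∫ L dq + KL(q‖P)`: for every probability
measure `q ≪ P` with finite KL divergence and `L` `q`-integrable,
`∫ L dq + KL(q‖P) ≥ ∫ L dq* + KL(q*‖P) = -log Z`, with equality iff `q = q*`. -/
theorem gibbs_posterior_unique_minimiser
    {Θ : Type*} [MeasurableSpace Θ] (P : Measure Θ) [IsProbabilityMeasure P]
    (L : Θ → ℝ) (hL_meas : Measurable L) (C : ℝ) (hL_bdd : ∀ θ, |L θ| ≤ C)
    (Z : ℝ) (hZ : Z = ∫ θ, Real.exp (-L θ) ∂P)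
    (qs : Measure Θ)
    (hqs : qs = P.withDensity (fun θ => ENNReal.ofReal (Real.exp (-L θ) / Z))) :
    ((∫ θ, L θ ∂qs) + ∫ θ, llr qs P θ ∂qs = -Real.log Z) ∧
      ∀ q : Measure Θ, IsProbabilityMeasure q → q ≪ P →
        Integrable (llr q P) q → Integrable L q →
          ((∫ θ, L θ ∂qs) + ∫ θ, llr qs P θ ∂qs
              ≤ (∫ θ, L θ ∂q) + ∫ θ, llr q P θ ∂q) ∧
          ((∫ θ, L θ ∂q) + ∫ θ, llr q P θ ∂q
              = (∫ θ, L θ ∂qs) + ∫ θ, llr qs P θ ∂qs ↔ q = qs) := by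
  have hexpI : Integrable (fun θ => Real.exp (-L θ)) P := by
    refine (integrable_const (Real.exp C)).mono' (hL_meas.neg.exp.aestronglyMeasurable)
      (ae_of_all _ fun θ => ?_)
    rw [Real.norm_eq_abs, abs_of_nonneg (Real.exp_pos _).le]
    exact Real.exp_le_exp.2 (neg_le.1 ((abs_le.1 (hL_bdd θ)).1))
  have hqs_tilted : qs = P.tilted (fun θ => -L θ) := by
    rw [hqs, hZ]; rfl
  have hqs_prob : IsProbabilityMeasure qs := by
    rw [hqs_tilted]; exact isProbabilityMeasure_tilted hexpI
  have hZpos : 0 < Z := by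
    rw [hZ]; exact integral_exp_pos hexpI
  have hqsP : qs ≪ P := hqs_tilted ▸ tilted_absolutelyContinuous P _
  have hPqs : P ≪ qs := hqs_tilted ▸ absolutelyContinuous_tilted hexpI
  have hLqs : Integrable L qs :=
    (integrable_const C).mono' hL_meas.aestronglyMeasurable
      (ae_of_all _ fun θ => by rw [Real.norm_eq_abs]; exact hL_bdd θ)
  -- llr qs P =ᵐ[qs] -L - log Z
  have h1 : llr qs P =ᵐ[qs] fun θ => -L θ - Real.log Z := by
    have h := llr_tilted_left (f := fun θ => -L θ) (Measure.AbsolutelyContinuous.refl P)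
      hexpI hL_meas.neg.aemeasurable
    have hself : llr P P =ᵐ[P] fun _ => 0 := by
      filter_upwards [Measure.rnDeriv_self P] with x hx
      simp [llr, hx]
    rw [← hqs_tilted] at h
    have h' := hqsP.ae_le (h.and hself)
    filter_upwards [h'] with x hx
    rw [hx.1, hx.2, ← hZ]
    ring
  have hpart1 : (∫ θ, L θ ∂qs) + ∫ θ, llr qs P θ ∂qs = -Real.log Z := by
    rw [integral_congr_ae h1]
    have : ∫ θ, (-L θ - Real.log Z) ∂qs = (∫ θ, -L θ ∂qs) - ∫ _, Real.log Z ∂qs :=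
      integral_sub hLqs.neg (integrable_const _)
    rw [this, integral_neg, integral_const]
    simp only [measure_univ, ENNReal.toReal_one, probReal_univ, smul_eq_mul, one_mul]
    ring
  refine ⟨hpart1, fun q hq hqP hq_int hLq => ?_⟩
  have hqqs : q ≪ qs := hqP.trans hPqs
  have h2 : llr q qs =ᵐ[q] fun x => L x + Real.log Z + llr q P x := by
    have h := llr_tilted_right (f := fun θ => -L θ) hqP hexpI
    rw [← hqs_tilted] at h
    filter_upwards [h] with x hx
    rw [hx, ← hZ]
    ring
  have hint2 : Integrable (llr q qs) q := by
    rw [integrable_congr h2]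
    exact (hLq.add (integrable_const _)).add hq_int
  have hD : ∫ x, llr q qs x ∂q = (∫ x, L x ∂q) + Real.log Z + ∫ x, llr q P x ∂q := by
    have ha : Integrable (fun x => L x + Real.log Z) q := hLq.add (integrable_const _)
    rw [integral_congr_ae h2, integral_add ha hq_int, integral_add hLq (integrable_const _),
      integral_const]
    simp [measure_univ]
  obtain ⟨hge, heq⟩ := gibbs_aux q qs hqqs hint2
  constructor
  · rw [hpart1]; linarith [hD ▸ hge]
  · constructor
    · intro h
      apply heq
      rw [hD]
      rw [hpart1] at h
      linarith
    · intro h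
      rw [h]
end
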